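/- The 'Batman' density B(x), defined on [-3,3] by B(x) = (3+x)/sqrt(3-2x-x^2) + (3-x)/sqrt(3+2x-x^2) for |x|<1, B(x) = (3-|x|)/sqrt(3+2|x|-x^2) for 1 ≤ |x| ≤ 3, and 0 otherwise, satisfies (1/(4π)) ∫_{-3}^{3} B(t) dt = 1; that is, B(t)/(4π) is a probability density on [-3,3]. -/

import Mathlib

open Real MeasureTheory

/-- The "Batman" density. -/
noncomputable def batman (x : ℝ) : ℝ :=
  if |x| < 1 then
    (3 + x) / Real.sqrt (3 - 2*x - x^2) + (3 - x) / Real.sqrt (3 + 2*x - x^2)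
  else if |x| ≤ 3 then
    (3 - |x|) / Real.sqrt (3 + 2*|x| - x^2)
  else 0

open Set intervalIntegral
open scoped Interval

/-!
On `[-3, 1]` put `h x = (3 + x) / √(3 - 2x - x²)` (`batmanHalf`). The density agrees with `h` on
`[-3, -1]`, with `h x + h (-x)` on `[-1, 1]` and with `h (-x)` on `[1, 3]`, so reflecting `x ↦ -x`
gives `∫_{-3}^{3} B = 2 ∫_{-3}^{1} h`. As `3 - 2x - x² = 4 - (x + 1)²`, the function `h` has the
primitive `2 arcsin ((x + 1) / 2) - √(3 - 2x - x²)`, continuous on `[-3, 1]`; since `h ≥ 0` this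
makes `h` integrable despite its singularity at `1`, and `∫_{-3}^{1} h = 2 (π / 2) - 2 (-π / 2) = 2π`.
-/

noncomputable def batmanHalf (x : ℝ) : ℝ := (3 + x) / √(3 - 2 * x - x ^ 2)

noncomputable def batmanHalfPrimitive (x : ℝ) : ℝ :=
  2 * arcsin ((x + 1) / 2) - √(3 - 2 * x - x ^ 2)

lemma continuous_batmanHalfPrimitive : Continuous batmanHalfPrimitive := by
  unfold batmanHalfPrimitive
  fun_prop

lemma hasDerivAt_batmanHalfPrimitive {x : ℝ} (hx : x ∈ Ioo (-3) 1) :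
    HasDerivAt batmanHalfPrimitive (batmanHalf x) x := by
  obtain ⟨h₃, h₁⟩ := hx
  have hq : 0 < 3 - 2 * x - x ^ 2 := by nlinarith
  have hsin : √(1 - ((x + 1) / 2) ^ 2) = √(3 - 2 * x - x ^ 2) / 2 := by
    rw [show 1 - ((x + 1) / 2) ^ 2 = (3 - 2 * x - x ^ 2) / 2 ^ 2 by ring,
      sqrt_div' _ (by positivity), sqrt_sq zero_le_two]
  have hlin : HasDerivAt (fun y : ℝ => (y + 1) / 2) (1 / 2) x := by
    simpa using ((hasDerivAt_id x).add_const 1).div_const 2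
  have hquad : HasDerivAt (fun y : ℝ => 3 - 2 * y - y ^ 2) (-2 - 2 * x) x := by
    refine ((((hasDerivAt_id x).const_mul 2).const_sub 3).sub (hasDerivAt_pow 2 x)).congr_deriv ?_
    norm_num
  have harcsin := (hasDerivAt_arcsin (by linarith) (by linarith)).comp x hlin
  refine ((harcsin.const_mul 2).sub (hquad.sqrt hq.ne')).congr_deriv ?_
  rw [hsin, batmanHalf]
  field_simp
  ring

lemma batmanHalf_nonneg {x : ℝ} (hx : -3 ≤ x) : 0 ≤ batmanHalf x :=
  div_nonneg (by linarith) (sqrt_nonneg _)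

lemma intervalIntegrable_batmanHalf : IntervalIntegrable batmanHalf volume (-3) 1 := by
  refine intervalIntegrable_deriv_of_nonneg
    continuous_batmanHalfPrimitive.continuousOn (fun x hx => ?_) (fun x hx => ?_) <;>
    rw [min_eq_left (by norm_num), max_eq_right (by norm_num)] at hx
  · exact hasDerivAt_batmanHalfPrimitive hx
  · exact batmanHalf_nonneg hx.1.le

lemma integral_batmanHalf : ∫ x in (-3 : ℝ)..1, batmanHalf x = 2 * π := by
  rw [integral_eq_sub_of_hasDerivAt_of_le (by norm_num)
    continuous_batmanHalfPrimitive.continuousOn (fun x hx => hasDerivAt_batmanHalfPrimitive hx)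
    intervalIntegrable_batmanHalf]
  norm_num [batmanHalfPrimitive]
  ring

lemma batman_eqOn_left : EqOn batman batmanHalf [[-3, -1]] := by
  intro x hx
  obtain ⟨h₃, h₁⟩ : -3 ≤ x ∧ x ≤ -1 := by rwa [uIcc_of_le (by norm_num)] at hx
  have hxabs : |x| = -x := abs_of_nonpos (by linarith)
  rw [batman, if_neg (by rw [hxabs]; linarith), if_pos (by rw [hxabs]; linarith), hxabs]
  simp only [batmanHalf]
  ring_nf

lemma batman_eqOn_mid : EqOn batman (fun x => batmanHalf x + batmanHalf (-x)) [[-1, 1]] := by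
  intro x hx
  obtain ⟨h₁, h₁'⟩ : -1 ≤ x ∧ x ≤ 1 := by rwa [uIcc_of_le (by norm_num)] at hx
  -- At `x = ±1` the summand `batmanHalf 1 = 4 / √0` vanishes by the convention `a / 0 = 0`.
  rcases h₁.eq_or_lt with rfl | hl
  · norm_num [batman, batmanHalf]
  rcases h₁'.lt_or_eq with hr | rfl
  · rw [batman, if_pos (abs_lt.2 ⟨hl, hr⟩)]
    simp only [batmanHalf]
    ring_nf
  · norm_num [batman, batmanHalf]

lemma batman_eqOn_right : EqOn batman (fun x => batmanHalf (-x)) [[1, 3]] := by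
  intro x hx
  obtain ⟨h₁, h₃⟩ : 1 ≤ x ∧ x ≤ 3 := by rwa [uIcc_of_le (by norm_num)] at hx
  have hxabs : |x| = x := abs_of_nonneg (by linarith)
  rw [batman, if_neg (by rw [hxabs]; linarith), if_pos (by rw [hxabs]; linarith), hxabs]
  simp only [batmanHalf]
  ring_nf

lemma integral_batman : ∫ t in (-3 : ℝ)..3, batman t = 2 * ∫ x in (-3 : ℝ)..1, batmanHalf x := by
  have hL : IntervalIntegrable batmanHalf volume (-3) (-1) :=
    intervalIntegrable_batmanHalf.mono_set (uIcc_subset_uIcc_left (by norm_num))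
  have hM : IntervalIntegrable batmanHalf volume (-1) 1 :=
    intervalIntegrable_batmanHalf.mono_set (uIcc_subset_uIcc_right (by norm_num))
  have hM' : IntervalIntegrable (fun x => batmanHalf (-x)) volume (-1) 1 := by
    simpa using (IntervalIntegrable.iff_comp_neg (f := batmanHalf)).1 hM.symm
  have hR : IntervalIntegrable (fun x => batmanHalf (-x)) volume 1 3 := by
    simpa using (IntervalIntegrable.iff_comp_neg (f := batmanHalf)).1 hL.symm
  have hLb := hL.congr (batman_eqOn_left.symm.mono uIoc_subset_uIcc)
  have hMb := (hM.add hM').congr (batman_eqOn_mid.symm.mono uIoc_subset_uIcc)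
  have hRb := hR.congr (batman_eqOn_right.symm.mono uIoc_subset_uIcc)
  rw [← integral_add_adjacent_intervals (hLb.trans hMb) hRb,
    ← integral_add_adjacent_intervals hLb hMb, integral_congr batman_eqOn_left,
    integral_congr batman_eqOn_mid, integral_congr batman_eqOn_right, integral_add hM hM',
    integral_comp_neg, integral_comp_neg, neg_neg, ← integral_add_adjacent_intervals hL hM]
  ring

theorem batman_is_probability_density :
    (1 / (4 * π)) * ∫ t in (-3 : ℝ)..3, batman t = 1 := by
  rw [integral_batman, integral_batmanHalf]
  field_simp
  ring
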